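/- arXiv:1310.8498 — 4 statements merged into one kernel-verified Lean document; each statement's English description precedes it below -/
import Mathlib

section
/- Let n ≥ 1 and consider the finite index set {0,1,…,n}. Suppose κ is a real-valued function on the nonempty subsets of {0,1,…,n} (the 'cumulants'), and define the 'moments' m by m(∅) = 1 and, for every nonempty subset I ⊆ {0,1,…,n}, m(I) = Σ_P Π_{B ∈ P} κ(B), where the sum is over all set partitions P of I. Assume that m({0} ∪ I) = m(I) for every subset I ⊆ {1,…,n} (including I = ∅). Then κ({0} ∪ I) = 0 for every nonempty subset I ⊆ {1,…,n}. -/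
/-- `P` is a set partition of the finite set `I`: its blocks are nonempty,
pairwise disjoint, and their union is `I`. -/
def IsSetPartition {n : ℕ} (I : Finset (Fin (n + 1)))
    (P : Finset (Finset (Fin (n + 1)))) : Prop :=
  (∀ B ∈ P, B.Nonempty) ∧
    (P : Set (Finset (Fin (n + 1)))).PairwiseDisjoint id ∧ P.sup id = I

open Classical in
/-- The finite set of all set partitions of `I`. -/
noncomputable def partitionsOf {n : ℕ} (I : Finset (Fin (n + 1))) :
    Finset (Finset (Finset (Fin (n + 1)))) :=
  I.powerset.powerset.filter (IsSetPartition I)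

lemma mem_partitionsOf {n : ℕ} {I : Finset (Fin (n + 1))}
    {P : Finset (Finset (Fin (n + 1)))} :
    P ∈ partitionsOf I ↔ IsSetPartition I P := by
  classical
  unfold partitionsOf
  rw [Finset.mem_filter]
  constructor
  · exact fun h => h.2
  · intro h
    refine ⟨?_, h⟩
    rw [Finset.mem_powerset]
    intro B hB
    rw [Finset.mem_powerset]
    exact h.2.2 ▸ Finset.le_sup (f := id) hB

lemma existsUnique_block {n : ℕ} {I : Finset (Fin (n + 1))}
    {P : Finset (Finset (Fin (n + 1)))} (hP : IsSetPartition I P)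
    {x : Fin (n + 1)} (hx : x ∈ I) : ∃! B, B ∈ P ∧ x ∈ B := by
  obtain ⟨hne, hdisj, hsup⟩ := hP
  have hx' : x ∈ P.sup id := hsup ▸ hx
  rw [Finset.mem_sup] at hx'
  obtain ⟨B, hB, hxB⟩ := hx'
  refine ⟨B, ⟨hB, hxB⟩, ?_⟩
  rintro B' ⟨hB', hxB'⟩
  by_contra hne'
  exact (Finset.disjoint_left.1 (hdisj hB' hB hne') hxB') hxB

lemma sup_erase_eq {n : ℕ} {I : Finset (Fin (n + 1))}
    {P : Finset (Finset (Fin (n + 1)))} (hP : IsSetPartition I P)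
    {B₀ : Finset (Fin (n + 1))} (hB₀ : B₀ ∈ P) :
    (P.erase B₀).sup id = I \ B₀ := by
  obtain ⟨hne, hdisj, hsup⟩ := hP
  ext x
  simp only [Finset.mem_sup, Finset.mem_erase, Finset.mem_sdiff, id_eq]
  constructor
  · rintro ⟨B, ⟨hBne, hB⟩, hxB⟩
    refine ⟨hsup ▸ Finset.mem_sup.2 ⟨B, hB, hxB⟩, fun hx0 => ?_⟩
    exact (Finset.disjoint_left.1 (hdisj hB hB₀ hBne) hxB) hx0
  · rintro ⟨hxI, hx0⟩
    have hx' : x ∈ P.sup id := hsup ▸ hxI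
    rw [Finset.mem_sup] at hx'
    obtain ⟨B, hB, hxB⟩ := hx'
    exact ⟨B, ⟨fun h => hx0 (h ▸ hxB), hB⟩, hxB⟩

lemma partitionsOf_empty {n : ℕ} : partitionsOf (∅ : Finset (Fin (n + 1))) = {∅} := by
  ext P
  rw [mem_partitionsOf, Finset.mem_singleton]
  constructor
  · rintro ⟨hne, -, hsup⟩
    by_contra h
    obtain ⟨B, hB⟩ := Finset.nonempty_iff_ne_empty.2 h
    obtain ⟨x, hx⟩ := hne B hB
    have : x ∈ P.sup id := Finset.mem_sup.2 ⟨B, hB, hx⟩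
    rw [hsup] at this
    exact absurd this (Finset.notMem_empty x)
  · rintro rfl
    exact ⟨fun B hB => absurd hB (Finset.notMem_empty B), by simp, rfl⟩

lemma key_decomp {n : ℕ} (κ : Finset (Fin (n + 1)) → ℝ)
    (I : Finset (Fin (n + 1))) (h0 : (0 : Fin (n + 1)) ∉ I) :
    ∑ P ∈ partitionsOf (insert 0 I), ∏ B ∈ P, κ B
      = ∑ J ∈ I.powerset, κ (insert 0 J) * ∑ Q ∈ partitionsOf (I \ J), ∏ B ∈ Q, κ B := by
  classical
  have hrhs : (∑ J ∈ I.powerset, κ (insert 0 J) * ∑ Q ∈ partitionsOf (I \ J), ∏ B ∈ Q, κ B)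
      = ∑ x ∈ I.powerset.sigma (fun J => partitionsOf (I \ J)),
          κ (insert 0 x.1) * ∏ B ∈ x.2, κ B := by
    rw [Finset.sum_sigma]
    exact Finset.sum_congr rfl fun J _ => (Finset.mul_sum _ _ _)
  rw [hrhs]
  have h0mem : ∀ P (hP : P ∈ partitionsOf (insert 0 I)),
      ∃! B, B ∈ P ∧ (0 : Fin (n + 1)) ∈ B := fun P hP =>
    existsUnique_block (mem_partitionsOf.1 hP) (Finset.mem_insert_self 0 I)
  refine Finset.sum_bij'
    (fun P hP => ⟨(P.choose _ (h0mem P hP)).erase 0, P.erase (P.choose _ (h0mem P hP))⟩)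
    (fun x hx => insert (insert 0 x.1) x.2) ?_ ?_ ?_ ?_ ?_
  · -- forward lands in sigma set
    intro P hP
    have hpart := mem_partitionsOf.1 hP
    set B₀ := P.choose _ (h0mem P hP) with hB₀def
    have hB₀mem : B₀ ∈ P := (P.choose_spec _ (h0mem P hP)).1
    have h0B₀ : (0 : Fin (n + 1)) ∈ B₀ := (P.choose_spec _ (h0mem P hP)).2
    have hB₀sub : B₀ ⊆ insert 0 I := hpart.2.2 ▸ Finset.le_sup (f := id) hB₀mem
    rw [Finset.mem_sigma]
    constructor
    · rw [Finset.mem_powerset]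
      intro x hx
      have := hB₀sub (Finset.mem_erase.1 hx).2
      rcases Finset.mem_insert.1 this with h | h
      · exact absurd h (Finset.mem_erase.1 hx).1
      · exact h
    · rw [mem_partitionsOf]
      refine ⟨fun B hB => hpart.1 B (Finset.mem_erase.1 hB).2,
        hpart.2.1.subset (by intro B hB; exact Finset.mem_coe.2 ((Finset.mem_erase.1 hB).2)), ?_⟩
      rw [sup_erase_eq hpart hB₀mem]
      ext x
      simp only [Finset.mem_sdiff, Finset.mem_insert, Finset.mem_erase]
      constructor
      · rintro ⟨hx, hxB₀⟩
        rcases hx with rfl | hx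
        · exact absurd h0B₀ hxB₀
        · exact ⟨hx, fun h => hxB₀ h.2⟩
      · rintro ⟨hx, hxB₀⟩
        exact ⟨Or.inr hx, fun h => hxB₀ ⟨fun h' => h0 (h' ▸ hx), h⟩⟩
  · -- backward lands in partitions
    rintro ⟨J, Q⟩ hx
    rw [Finset.mem_sigma] at hx
    obtain ⟨hJ, hQ⟩ := hx
    rw [Finset.mem_powerset] at hJ
    have hQpart := mem_partitionsOf.1 hQ
    have hblocks : ∀ B ∈ Q, B ⊆ I \ J := fun B hB =>
      hQpart.2.2 ▸ Finset.le_sup (f := id) hB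
    have hnotin : insert (0 : Fin (n + 1)) J ∉ Q := by
      intro h
      have := hblocks _ h (Finset.mem_insert_self 0 J)
      exact h0 (Finset.mem_sdiff.1 this).1
    rw [mem_partitionsOf]
    refine ⟨?_, ?_, ?_⟩
    · intro B hB
      rcases Finset.mem_insert.1 hB with rfl | hB
      · exact ⟨0, Finset.mem_insert_self 0 J⟩
      · exact hQpart.1 B hB
    · intro B hB B' hB' hne
      simp only [Finset.coe_insert, Set.mem_insert_iff, Finset.mem_coe] at hB hB'
      have hdisj0 : ∀ B ∈ Q, Disjoint (insert (0 : Fin (n + 1)) J) B := by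
        intro B hB
        rw [Finset.disjoint_left]
        intro a ha haB
        have haIJ := hblocks B hB haB
        rcases Finset.mem_insert.1 ha with rfl | ha
        · exact h0 (Finset.mem_sdiff.1 haIJ).1
        · exact (Finset.mem_sdiff.1 haIJ).2 ha
      rcases hB with rfl | hB <;> rcases hB' with rfl | hB'
      · exact absurd rfl hne
      · exact hdisj0 B' hB'
      · exact (hdisj0 B hB).symm
      · exact hQpart.2.1 hB hB' hne
    · rw [Finset.sup_insert, hQpart.2.2]
      ext x
      simp only [Finset.mem_union, Finset.mem_insert, Finset.mem_sdiff, id_eq, Finset.sup_eq_union]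
      constructor
      · rintro ((rfl | h) | ⟨h, -⟩)
        · exact Or.inl rfl
        · exact Or.inr (hJ h)
        · exact Or.inr h
      · rintro (rfl | h)
        · exact Or.inl (Or.inl rfl)
        · by_cases hxJ : x ∈ J
          · exact Or.inl (Or.inr hxJ)
          · exact Or.inr ⟨h, hxJ⟩
  · -- left inverse
    intro P hP
    have hB₀mem : P.choose _ (h0mem P hP) ∈ P := (P.choose_spec _ (h0mem P hP)).1
    have h0B₀ : (0 : Fin (n + 1)) ∈ P.choose _ (h0mem P hP) :=
      (P.choose_spec _ (h0mem P hP)).2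
    simp only
    rw [Finset.insert_erase h0B₀, Finset.insert_erase hB₀mem]
  · -- right inverse
    rintro ⟨J, Q⟩ hx
    rw [Finset.mem_sigma] at hx
    obtain ⟨hJ, hQ⟩ := hx
    rw [Finset.mem_powerset] at hJ
    have hQpart := mem_partitionsOf.1 hQ
    have hblocks : ∀ B ∈ Q, B ⊆ I \ J := fun B hB =>
      hQpart.2.2 ▸ Finset.le_sup (f := id) hB
    have h0J : (0 : Fin (n + 1)) ∉ J := fun h => h0 (hJ h)
    have hnotin : insert (0 : Fin (n + 1)) J ∉ Q := by
      intro h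
      have := hblocks _ h (Finset.mem_insert_self 0 J)
      exact h0 (Finset.mem_sdiff.1 this).1
    set P := insert (insert (0 : Fin (n + 1)) J) Q with hPdef
    have hchoose : ∀ (h' : ∃! B, B ∈ P ∧ (0 : Fin (n + 1)) ∈ B),
        P.choose (fun B => (0 : Fin (n + 1)) ∈ B) h' = insert 0 J := by
      intro h'
      exact h'.unique ⟨(P.choose_spec _ h').1, (P.choose_spec _ h').2⟩
        ⟨Finset.mem_insert_self _ _, Finset.mem_insert_self 0 J⟩
    simp only
    rw [hchoose]
    congr 1
    · rw [Finset.erase_insert h0J]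
    · rw [Finset.erase_insert hnotin]
  · -- values agree
    intro P hP
    have hB₀mem : P.choose _ (h0mem P hP) ∈ P := (P.choose_spec _ (h0mem P hP)).1
    have h0B₀ : (0 : Fin (n + 1)) ∈ P.choose _ (h0mem P hP) :=
      (P.choose_spec _ (h0mem P hP)).2
    simp only
    rw [Finset.insert_erase h0B₀, Finset.mul_prod_erase _ _ hB₀mem]

/-- If the moments `m` are built from the cumulants `κ` by the moment–cumulant
formula, `m ∅ = 1`, and inserting the index `0` does not change any moment, then
every cumulant involving `0` together with at least one further index vanishes. -/
theorem cumulants_with_constant_vanish (n : ℕ) (hn : 1 ≤ n)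
    (κ m : Finset (Fin (n + 1)) → ℝ)
    (hm0 : m ∅ = 1)
    (hm : ∀ I : Finset (Fin (n + 1)), I.Nonempty →
      m I = ∑ P ∈ partitionsOf I, ∏ B ∈ P, κ B)
    (hconst : ∀ I : Finset (Fin (n + 1)), 0 ∉ I → m (insert 0 I) = m I) :
    ∀ I : Finset (Fin (n + 1)), 0 ∉ I → I.Nonempty → κ (insert 0 I) = 0 := by
  classical
  set S : Finset (Fin (n + 1)) → ℝ := fun I => ∑ P ∈ partitionsOf I, ∏ B ∈ P, κ B with hSdef
  have hSempty : S ∅ = 1 := by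
    simp [hSdef, partitionsOf_empty]
  have hmS : ∀ I, m I = S I := by
    intro I
    rcases I.eq_empty_or_nonempty with rfl | hne
    · rw [hm0, hSempty]
    · exact hm I hne
  have key : ∀ I : Finset (Fin (n + 1)), 0 ∉ I →
      S I = ∑ J ∈ I.powerset, κ (insert 0 J) * S (I \ J) := by
    intro I h0
    have := key_decomp κ I h0
    rw [hSdef]
    simp only
    rw [← this, ← hm (insert 0 I) (Finset.insert_nonempty _ _), hconst I h0, hmS I]
  have hκ0 : κ {0} = 1 := by
    have := key ∅ (Finset.notMem_empty _)
    simp [hSempty] at this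
    linarith
  -- strong induction on the cardinality
  suffices H : ∀ k, ∀ I : Finset (Fin (n + 1)), I.card ≤ k → 0 ∉ I → I.Nonempty →
      κ (insert 0 I) = 0 by
    intro I h0I hIne
    exact H I.card I le_rfl h0I hIne
  intro k
  induction k with
  | zero =>
    intro I hcard h0I hIne
    have := Finset.card_pos.2 hIne
    omega
  | succ k ih =>
    intro I hcard h0I hIne
    have hk := key I h0I
    have hmemI : I ∈ I.powerset := Finset.mem_powerset_self I
    have hmemE : (∅ : Finset (Fin (n + 1))) ∈ I.powerset := Finset.empty_mem_powerset I
    have hne : (∅ : Finset (Fin (n + 1))) ≠ I := fun h => hIne.ne_empty h.symm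
    rw [← Finset.add_sum_erase _ _ hmemE,
        ← Finset.add_sum_erase _ _ (Finset.mem_erase.2 ⟨hne.symm, hmemI⟩)] at hk
    have hrest : ∑ J ∈ (I.powerset.erase ∅).erase I, κ (insert 0 J) * S (I \ J) = 0 := by
      apply Finset.sum_eq_zero
      intro J hJ
      have hJI : J ≠ I := (Finset.mem_erase.1 hJ).1
      have hJ' := (Finset.mem_erase.1 hJ).2
      have hJne : J ≠ ∅ := (Finset.mem_erase.1 hJ').1
      have hJsub : J ⊆ I := Finset.mem_powerset.1 (Finset.mem_erase.1 hJ').2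
      have h0J : (0 : Fin (n + 1)) ∉ J := fun h => h0I (hJsub h)
      have hcardlt : J.card ≤ k := by
        have := Finset.card_lt_card (Finset.ssubset_iff_subset_ne.2 ⟨hJsub, hJI⟩)
        omega
      rw [ih J hcardlt h0J (Finset.nonempty_iff_ne_empty.2 hJne), zero_mul]
    rw [hrest, add_zero] at hk
    simp only [show insert (0 : Fin (n + 1)) (∅ : Finset (Fin (n + 1))) = {0} from rfl, Finset.sdiff_empty, Finset.sdiff_self, hSempty,
      hκ0, one_mul, mul_one] at hk
    linarith
end

section
/- Let N ≥ 1 be an integer and let ρ_N be the unscaled GUE eigenvalue density. Then ρ_N satisfies, for every real x, the third order linear ordinary differential equation ρ_N'''(x) + (4N − x²)·ρ_N'(x) + x·ρ_N(x) = 0. -/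
open Nat MeasureTheory

/-- The orthonormal Hermite functions' polynomial part:
`p_n(x) = He_n(x)/√(√(2π)·n!)`, orthonormal for the weight `e^{-x²/2}` on `ℝ`. -/
noncomputable def pOrtho (n : ℕ) (x : ℝ) : ℝ :=
  Polynomial.aeval x (Polynomial.hermite n) /
    Real.sqrt (Real.sqrt (2 * Real.pi) * (n ! : ℝ))

/-- The (unscaled) GUE eigenvalue density
`ρ_N(x) = √N · e^{-x²/2} · (p_N'(x)p_{N-1}(x) − p_N(x)p_{N-1}'(x))`. -/
noncomputable def gueDensity (N : ℕ) (x : ℝ) : ℝ :=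
  Real.sqrt N * Real.exp (-x ^ 2 / 2) *
    (deriv (pOrtho N) x * pOrtho (N - 1) x - pOrtho N x * deriv (pOrtho (N - 1)) x)

/-!
Write `c = √N`, `A = p_N`, `B = p_{N-1}`. The Hermite recurrences give the closed system
`A' = c B`, `B' = x B - c A`, and with it `ρ_N = e^{-x²/2} (c² (A² + B²) - c x A B)`.
Differentiating three times inside this system stays in the span of `e^{-x²/2} A B` and
`e^{-x²/2} (A² ± B²)`: `ρ' = -c e^{-x²/2} A B`, `ρ'' = c² e^{-x²/2} (A² - B²)` and
`ρ''' = c² e^{-x²/2} (4 c A B - x (A² + B²))`, from which the ODE is a polynomial identity.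
-/

namespace Polynomial

theorem derivative_hermite (n : ℕ) : derivative (hermite n) = X * hermite n - hermite (n + 1) := by
  rw [hermite_succ]
  ring

theorem derivative_hermite_succ (n : ℕ) :
    derivative (hermite (n + 1)) = ((n : ℤ[X]) + 1) * hermite n := by
  induction n with
  | zero => simp [hermite_succ]
  | succ k ih =>
    rw [hermite_succ (k + 1), derivative_sub, derivative_mul, derivative_X, one_mul, ih,
      derivative_mul, derivative_hermite k]
    simp only [derivative_add, derivative_natCast, derivative_one, add_zero, zero_mul]
    push_cast
    ring

end Polynomial

open Polynomial Real

lemma pOrtho_succ (n : ℕ) (x : ℝ) :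
    pOrtho (n + 1) x =
      aeval x (hermite (n + 1)) / (√(√(2 * π) * n !) * √(n + 1)) := by
  rw [pOrtho, ← sqrt_mul (by positivity), factorial_succ]
  push_cast
  ring_nf

lemma hasDerivAt_pOrtho_succ (n : ℕ) (x : ℝ) :
    HasDerivAt (pOrtho (n + 1)) (√(n + 1) * pOrtho n x) x := by
  have h : HasDerivAt (pOrtho (n + 1))
      (aeval x (derivative (hermite (n + 1))) / (√(√(2 * π) * n !) * √(n + 1))) x := by
    rw [show pOrtho (n + 1) = _ from _root_.funext (pOrtho_succ n)]
    exact ((hermite (n + 1)).hasDerivAt_aeval x).div_const _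
  refine h.congr_deriv ?_
  have hc : √((n : ℝ) + 1) ^ 2 = n + 1 := sq_sqrt (by positivity)
  have hc0 : √((n : ℝ) + 1) ≠ 0 := by positivity
  simp only [derivative_hermite_succ, pOrtho, map_mul, map_add, map_natCast, map_one]
  field_simp
  rw [hc]
  ring

lemma hasDerivAt_pOrtho (n : ℕ) (x : ℝ) :
    HasDerivAt (pOrtho n) (x * pOrtho n x - √(n + 1) * pOrtho (n + 1) x) x := by
  have h : HasDerivAt (pOrtho n) (aeval x (derivative (hermite n)) / √(√(2 * π) * n !)) x :=
    ((hermite n).hasDerivAt_aeval x).div_const _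
  refine h.congr_deriv ?_
  have hc0 : √((n : ℝ) + 1) ≠ 0 := by positivity
  rw [derivative_hermite, pOrtho_succ, pOrtho]
  simp only [map_sub, map_mul, aeval_X]
  field_simp

/-- For `c = √(n+1)`, `A = p_{n+1}`, `B = p_n` this is `e^{-x²/2} K_{n+1}(x, x)`, the weighted
Christoffel–Darboux kernel on the diagonal. -/
noncomputable def christoffelDarbouxDiag (c : ℝ) (A B : ℝ → ℝ) (x : ℝ) : ℝ :=
  exp (-x ^ 2 / 2) * (c ^ 2 * (A x ^ 2 + B x ^ 2) - c * x * (A x * B x))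

lemma gueDensity_succ (n : ℕ) :
    gueDensity (n + 1) = christoffelDarbouxDiag √(n + 1) (pOrtho (n + 1)) (pOrtho n) := by
  funext x
  rw [gueDensity, christoffelDarbouxDiag, (hasDerivAt_pOrtho_succ n x).deriv,
    Nat.add_sub_cancel, (hasDerivAt_pOrtho n x).deriv]
  push_cast
  ring

lemma hasDerivAt_exp_neg_sq_div_two (x : ℝ) :
    HasDerivAt (fun y => exp (-y ^ 2 / 2)) (-x * exp (-x ^ 2 / 2)) x := by
  have h : HasDerivAt (fun y : ℝ => -y ^ 2 / 2) (-x) x := by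
    simpa [neg_div] using ((hasDerivAt_pow 2 x).neg).div_const 2
  convert h.exp using 1
  ring

section ChristoffelDarboux

variable {A B : ℝ → ℝ} {c : ℝ}
  (hA : ∀ x, HasDerivAt A (c * B x) x) (hB : ∀ x, HasDerivAt B (x * B x - c * A x) x)
include hA hB

lemma hasDerivAt_christoffelDarbouxDiag (x : ℝ) :
    HasDerivAt (christoffelDarbouxDiag c A B) (-c * (exp (-x ^ 2 / 2) * (A x * B x))) x := by
  have hsq := ((hA x).pow 2).add ((hB x).pow 2)
  have hxAB := ((hasDerivAt_id x).const_mul c).mul ((hA x).mul (hB x))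
  refine ((hasDerivAt_exp_neg_sq_div_two x).mul
    ((hsq.const_mul (c ^ 2)).sub hxAB)).congr_deriv ?_
  simp only [Pi.mul_apply, Pi.pow_apply, Pi.add_apply, Pi.sub_apply, id]
  ring

lemma hasDerivAt_gaussian_mul_mul (x : ℝ) :
    HasDerivAt (fun y => -c * (exp (-y ^ 2 / 2) * (A y * B y)))
      (c ^ 2 * (exp (-x ^ 2 / 2) * (A x ^ 2 - B x ^ 2))) x := by
  refine (((hasDerivAt_exp_neg_sq_div_two x).mul ((hA x).mul (hB x))).const_mul
    (-c)).congr_deriv ?_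
  simp only [Pi.mul_apply]
  ring

lemma hasDerivAt_gaussian_mul_sq_sub_sq (x : ℝ) :
    HasDerivAt (fun y => c ^ 2 * (exp (-y ^ 2 / 2) * (A y ^ 2 - B y ^ 2)))
      (c ^ 2 * (exp (-x ^ 2 / 2) * (4 * c * (A x * B x) - x * (A x ^ 2 + B x ^ 2)))) x := by
  refine (((hasDerivAt_exp_neg_sq_div_two x).mul
    (((hA x).pow 2).sub ((hB x).pow 2))).const_mul (c ^ 2)).congr_deriv ?_
  simp only [Pi.pow_apply, Pi.sub_apply]
  ring

theorem christoffelDarbouxDiag_ode (x : ℝ) :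
    iteratedDeriv 3 (christoffelDarbouxDiag c A B) x +
        (4 * c ^ 2 - x ^ 2) * deriv (christoffelDarbouxDiag c A B) x +
      x * christoffelDarbouxDiag c A B x = 0 := by
  have d1 := funext fun y => (hasDerivAt_christoffelDarbouxDiag hA hB y).deriv
  have d2 := funext fun y => (hasDerivAt_gaussian_mul_mul hA hB y).deriv
  have d3 := funext fun y => (hasDerivAt_gaussian_mul_sq_sub_sq hA hB y).deriv
  rw [iteratedDeriv_eq_iterate]
  simp only [Function.iterate_succ, Function.iterate_zero, Function.comp_apply, id, d1, d2, d3]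
  rw [christoffelDarbouxDiag]
  ring

end ChristoffelDarboux

/-- The unscaled GUE eigenvalue density satisfies the third order linear ODE
`ρ_N''' + (4N − x²)ρ_N' + x·ρ_N = 0`. -/
theorem gueDensity_ode (N : ℕ) (hN : 1 ≤ N) (x : ℝ) :
    iteratedDeriv 3 (gueDensity N) x + (4 * (N : ℝ) - x ^ 2) * deriv (gueDensity N) x +
      x * gueDensity N x = 0 := by
  obtain ⟨n, rfl⟩ := Nat.exists_eq_add_of_le' hN
  have hc : √((n : ℝ) + 1) ^ 2 = n + 1 := sq_sqrt (by positivity)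
  have h := christoffelDarbouxDiag_ode (hasDerivAt_pOrtho_succ n) (hasDerivAt_pOrtho n) x
  rwa [← gueDensity_succ, hc, ← Nat.cast_add_one] at h
end

section
/- Let N ≥ 1 be an integer and let m_{2p} = ∫_ℝ x^{2p}·ρ_N(x) dx denote the even moments of the unscaled GUE eigenvalue density. Then m_0 = N, m_2 = N², and for every integer p ≥ 2, (p+1)·m_{2p} = (4p−2)·N·m_{2p−2} + (p−1)·(2p−1)·(2p−3)·m_{2p−4}. -/
open Nat MeasureTheory

/-- The even moments `m_{2p} = ∫_ℝ x^{2p} ρ_N(x) dx` of the unscaled GUE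
eigenvalue density. -/
noncomputable def gueMoment (N p : ℕ) : ℝ :=
  ∫ x : ℝ, x ^ (2 * p) * gueDensity N x

/-!
Up to the constant `√(2π) (N-1)!`, the density `ρ_N` is `e^{-x²/2} W(x)` with `W` the Wronskian
`He_N' He_{N-1} - He_N He_{N-1}'`. The operator `P ↦ xP - P'` is the adjoint of `d/dx` for the
weight `e^{-x²/2}` and generates the Hermite polynomials; this gives orthogonality, hence
`∫ e^{-x²/2} W = N! √(2π)`, i.e. `m_0 = N`. The Hermite equation makes `W` satisfy a third-order
equation `R³W = (x² - 4N) RW + xW` in `R = x - d/dx`; pairing it with `x^k` and moving every `R`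
onto `x^k` as a derivative yields the three-term recurrence for the moments `∫ x^k e^{-x²/2} W`.
-/

open Polynomial Real

lemma integrable_pow_mul_exp_neg_sq_div_two (k : ℕ) :
    Integrable fun x : ℝ => x ^ k * exp (-x ^ 2 / 2) := by
  have h := integrable_rpow_mul_exp_neg_mul_sq (b := 1 / 2) (by norm_num) (s := k)
    (by linarith [k.cast_nonneg (α := ℝ)])
  simp only [rpow_natCast] at h
  convert h using 4 with x
  ring

lemma integrable_exp_neg_sq_div_two_mul_aeval (P : ℝ[X]) :
    Integrable fun x : ℝ => exp (-x ^ 2 / 2) * aeval x P := by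
  induction P using Polynomial.induction_on' with
  | add p q hp hq =>
    simp only [map_add, mul_add]
    exact hp.add hq
  | monomial k c =>
    convert (integrable_pow_mul_exp_neg_sq_div_two k).const_mul c using 2 with x
    simp only [aeval_monomial, Algebra.algebraMap_self, RingHom.id_apply]
    ring

noncomputable def gaussianIntegral : ℝ[X] →ₗ[ℝ] ℝ where
  toFun P := ∫ x : ℝ, exp (-x ^ 2 / 2) * aeval x P
  map_add' P Q := by
    simp only [map_add, mul_add]
    exact integral_add (integrable_exp_neg_sq_div_two_mul_aeval P)
      (integrable_exp_neg_sq_div_two_mul_aeval Q)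
  map_smul' c P := by
    simp only [map_smul, smul_eq_mul, mul_left_comm _ c, integral_const_mul, RingHom.id_apply]

lemma gaussianIntegral_apply (P : ℝ[X]) :
    gaussianIntegral P = ∫ x : ℝ, exp (-x ^ 2 / 2) * aeval x P := rfl

lemma gaussianIntegral_one : gaussianIntegral 1 = √(2 * π) := by
  have h := integral_gaussian (1 / 2)
  rw [show π / (1 / 2) = 2 * π by ring] at h
  rw [gaussianIntegral_apply, ← h]
  congr 1 with x
  simp only [map_one, mul_one]
  ring_nf

lemma gaussianIntegral_C_mul (c : ℝ) (P : ℝ[X]) :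
    gaussianIntegral (C c * P) = c * gaussianIntegral P := by
  rw [← smul_eq_C_mul, map_smul, smul_eq_mul]

noncomputable def hermiteRaise (P : ℝ[X]) : ℝ[X] := X * P - derivative P

lemma gaussianIntegral_hermiteRaise (P : ℝ[X]) : gaussianIntegral (hermiteRaise P) = 0 := by
  have hderiv (x : ℝ) : HasDerivAt (fun y => exp (-y ^ 2 / 2) * aeval y P)
      (-(exp (-x ^ 2 / 2) * aeval x (hermiteRaise P))) x := by
    refine ((((hasDerivAt_pow 2 x).neg.div_const 2).exp).mul (P.hasDerivAt_aeval x)).congr_deriv ?_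
    simp only [hermiteRaise, map_sub, map_mul, aeval_X, Pi.neg_apply]
    ring
  have := integral_eq_zero_of_hasDerivAt_of_integrable hderiv
    (integrable_exp_neg_sq_div_two_mul_aeval _).neg (integrable_exp_neg_sq_div_two_mul_aeval P)
  rwa [integral_neg, neg_eq_zero] at this

lemma gaussianIntegral_mul_hermiteRaise (Q R : ℝ[X]) :
    gaussianIntegral (Q * hermiteRaise R) = gaussianIntegral (derivative Q * R) := by
  have h : Q * hermiteRaise R = hermiteRaise (Q * R) + derivative Q * R := by
    simp only [hermiteRaise, derivative_mul]
    ring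
  rw [h, map_add, gaussianIntegral_hermiteRaise, zero_add]

lemma gaussianIntegral_mul_iterate_hermiteRaise (m : ℕ) (Q R : ℝ[X]) :
    gaussianIntegral (Q * hermiteRaise^[m] R) = gaussianIntegral (derivative^[m] Q * R) := by
  induction m generalizing Q with
  | zero => rfl
  | succ m ih =>
    rw [Function.iterate_succ_apply', gaussianIntegral_mul_hermiteRaise, ih,
      ← Function.iterate_succ_apply]

noncomputable def hermiteReal (n : ℕ) : ℝ[X] := (hermite n).map (algebraMap ℤ ℝ)

lemma aeval_hermiteReal (n : ℕ) (x : ℝ) : aeval x (hermiteReal n) = aeval x (hermite n) :=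
  aeval_map_algebraMap ℝ x (hermite n)

lemma hermiteReal_succ (n : ℕ) : hermiteReal (n + 1) = hermiteRaise (hermiteReal n) := by
  simp only [hermiteReal, hermiteRaise, hermite_succ, Polynomial.map_sub, Polynomial.map_mul,
    map_X, derivative_map]

lemma hermiteReal_eq_iterate (n : ℕ) : hermiteReal n = hermiteRaise^[n] 1 := by
  induction n with
  | zero => simp [hermiteReal]
  | succ n ih => rw [hermiteReal_succ, ih, Function.iterate_succ_apply']

lemma natDegree_hermiteReal (n : ℕ) : (hermiteReal n).natDegree = n := by
  rw [hermiteReal, (hermite_monic n).natDegree_map, natDegree_hermite]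

lemma derivative_hermiteReal (n : ℕ) :
    derivative (hermiteReal n) = X * hermiteReal n - hermiteReal (n + 1) := by
  rw [hermiteReal_succ, hermiteRaise, sub_sub_cancel]

lemma derivative_hermiteReal_succ (n : ℕ) :
    derivative (hermiteReal (n + 1)) = C ((n : ℝ) + 1) * hermiteReal n := by
  induction n with
  | zero => simp [hermiteReal]
  | succ n ih =>
    rw [hermiteReal_succ (n + 1), hermiteRaise, derivative_sub, derivative_mul, ih, derivative_X,
      derivative_C_mul, derivative_hermiteReal]
    push_cast
    simp only [C_add, C_1]
    ring

lemma iterate_derivative_hermiteReal_self (n : ℕ) :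
    derivative^[n] (hermiteReal n) = C (n ! : ℝ) := by
  induction n with
  | zero => simp [hermiteReal]
  | succ n ih =>
    rw [Function.iterate_succ_apply, derivative_hermiteReal_succ, iterate_derivative_C_mul, ih,
      ← C_mul, factorial_succ]
    push_cast
    ring_nf

lemma gaussianIntegral_hermiteReal_mul (m : ℕ) (P : ℝ[X]) :
    gaussianIntegral (hermiteReal m * P) = gaussianIntegral (derivative^[m] P) := by
  rw [mul_comm, hermiteReal_eq_iterate, gaussianIntegral_mul_iterate_hermiteRaise, mul_one]

lemma gaussianIntegral_hermiteReal_mul_self (n : ℕ) :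
    gaussianIntegral (hermiteReal n * hermiteReal n) = n ! * √(2 * π) := by
  rw [gaussianIntegral_hermiteReal_mul, iterate_derivative_hermiteReal_self, ← mul_one (C _),
    gaussianIntegral_C_mul, gaussianIntegral_one]

lemma gaussianIntegral_hermiteReal_mul_of_natDegree_lt {m : ℕ} {P : ℝ[X]}
    (h : P.natDegree < m) :
    gaussianIntegral (hermiteReal m * P) = 0 := by
  rw [gaussianIntegral_hermiteReal_mul, iterate_derivative_eq_zero h, map_zero]

noncomputable def hermiteWronskian (n : ℕ) : ℝ[X] :=
  derivative (hermiteReal (n + 1)) * hermiteReal n -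
    hermiteReal (n + 1) * derivative (hermiteReal n)

lemma gaussianIntegral_hermiteWronskian (n : ℕ) :
    gaussianIntegral (hermiteWronskian n) = (n + 1)! * √(2 * π) := by
  have hdeg : (derivative (hermiteReal n)).natDegree < n + 1 :=
    (natDegree_derivative_le _).trans_lt (by rw [natDegree_hermiteReal]; omega)
  rw [hermiteWronskian, derivative_hermiteReal_succ, mul_assoc, map_sub, gaussianIntegral_C_mul,
    gaussianIntegral_hermiteReal_mul_self, gaussianIntegral_hermiteReal_mul_of_natDegree_lt hdeg,
    factorial_succ]
  push_cast
  ring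

/-- The third-order differential equation of the GUE density, in polynomial form. -/
lemma hermiteRaise_three_hermiteWronskian (n : ℕ) :
    hermiteRaise (hermiteRaise (hermiteRaise (hermiteWronskian n))) =
      (X ^ 2 - C (4 * (n : ℝ) + 4)) * hermiteRaise (hermiteWronskian n) +
        X * hermiteWronskian n := by
  have hn := derivative_hermiteReal n
  have hn1 := derivative_hermiteReal_succ n
  simp only [hermiteWronskian, hermiteRaise, derivative_sub, derivative_add, derivative_mul,
    derivative_X, derivative_C, derivative_one, derivative_zero, hn, hn1, C_add, C_mul, C_1,
    map_ofNat]
  ring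

lemma gaussianIntegral_iterate_derivative_mul_hermiteWronskian (n : ℕ) (Q : ℝ[X]) :
    gaussianIntegral (derivative^[3] Q * hermiteWronskian n) =
      gaussianIntegral (derivative (X ^ 2 * Q) * hermiteWronskian n) -
        (4 * n + 4) * gaussianIntegral (derivative Q * hermiteWronskian n) +
        gaussianIntegral (X * Q * hermiteWronskian n) := by
  have hQ : Q * hermiteRaise^[3] (hermiteWronskian n) =
      (X ^ 2 * Q - C (4 * (n : ℝ) + 4) * Q) * hermiteRaise (hermiteWronskian n) +
        X * Q * hermiteWronskian n := by
    simp only [Function.iterate_succ_apply', Function.iterate_zero_apply,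
      hermiteRaise_three_hermiteWronskian]
    ring
  rw [← gaussianIntegral_mul_iterate_hermiteRaise, hQ, map_add, gaussianIntegral_mul_hermiteRaise,
    derivative_sub, derivative_C_mul, sub_mul, map_sub, mul_assoc, gaussianIntegral_C_mul]

noncomputable def wronskianMoment (n k : ℕ) : ℝ := gaussianIntegral (X ^ k * hermiteWronskian n)

lemma gaussianIntegral_C_mul_X_pow_mul_hermiteWronskian (n k : ℕ) (c : ℝ) :
    gaussianIntegral (C c * X ^ k * hermiteWronskian n) = c * wronskianMoment n k := by
  rw [mul_assoc, gaussianIntegral_C_mul, wronskianMoment]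

lemma wronskianMoment_zero (n : ℕ) : wronskianMoment n 0 = (n + 1)! * √(2 * π) := by
  rw [wronskianMoment, pow_zero, one_mul, gaussianIntegral_hermiteWronskian]

/-- For `k < 3` the truncated indices `k - 1`, `k - 3` only occur with vanishing coefficients. -/
lemma wronskianMoment_recurrence (n k : ℕ) :
    ((k : ℝ) + 3) * wronskianMoment n (k + 1) =
      4 * ((n : ℝ) + 1) * k * wronskianMoment n (k - 1) +
        k.descFactorial 3 * wronskianMoment n (k - 3) := by
  have h := gaussianIntegral_iterate_derivative_mul_hermiteWronskian n (X ^ k)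
  rw [iterate_derivative_X_pow_eq_C_mul, ← pow_add, derivative_X_pow, derivative_X_pow,
    ← pow_succ' (X : ℝ[X]) k, show 2 + k - 1 = k + 1 by omega] at h
  simp only [gaussianIntegral_C_mul_X_pow_mul_hermiteWronskian] at h
  rw [← wronskianMoment] at h
  push_cast at h
  linarith

lemma wronskianMoment_two (n : ℕ) : wronskianMoment n 2 = (n + 1) * wronskianMoment n 0 := by
  have h := wronskianMoment_recurrence n 1
  norm_num at h
  linarith

lemma wronskianMoment_add_four (n k : ℕ) :
    ((k : ℝ) + 6) * wronskianMoment n (k + 4) =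
      4 * ((n : ℝ) + 1) * ((k : ℝ) + 3) * wronskianMoment n (k + 2) +
        ((k : ℝ) + 3) * ((k : ℝ) + 2) * ((k : ℝ) + 1) * wronskianMoment n k := by
  have h := wronskianMoment_recurrence n (k + 3)
  simp only [Nat.descFactorial_succ, Nat.descFactorial_zero] at h
  push_cast at h
  linear_combination h

lemma pOrtho_eq (m : ℕ) :
    pOrtho m = fun x => aeval x (hermiteReal m) / √(√(2 * π) * m !) := by
  ext x
  rw [pOrtho, aeval_hermiteReal]

lemma deriv_pOrtho (m : ℕ) (x : ℝ) :
    deriv (pOrtho m) x = aeval x (derivative (hermiteReal m)) / √(√(2 * π) * m !) := by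
  rw [pOrtho_eq, deriv_div_const, Polynomial.deriv_aeval]

lemma sqrt_mul_sqrt_pOrtho_norm (n : ℕ) :
    √(√(2 * π) * (n + 1)!) * √(√(2 * π) * n !) = √(2 * π) * n ! * √((n : ℝ) + 1) := by
  rw [← sqrt_mul (by positivity), factorial_succ, cast_mul,
    show √(2 * π) * ((n + 1 : ℕ) * n !) * (√(2 * π) * n !) = (√(2 * π) * n !) ^ 2 * (n + 1) by
      push_cast; ring, sqrt_mul (by positivity), sqrt_sq (by positivity)]

lemma gueDensity_succ_s6 (n : ℕ) (x : ℝ) :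
    gueDensity (n + 1) x =
      exp (-x ^ 2 / 2) * aeval x (hermiteWronskian n) / (√(2 * π) * n !) := by
  have hc := sqrt_mul_sqrt_pOrtho_norm n
  rw [gueDensity, Nat.add_sub_cancel, deriv_pOrtho, deriv_pOrtho, pOrtho_eq, pOrtho_eq,
    hermiteWronskian]
  simp only [map_sub, map_mul, cast_add, cast_one]
  field_simp
  rw [hc]
  ring

lemma gueMoment_succ (n p : ℕ) :
    gueMoment (n + 1) p = wronskianMoment n (2 * p) / (√(2 * π) * n !) := by
  simp only [gueMoment, gueDensity_succ_s6, wronskianMoment, gaussianIntegral_apply, map_mul,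
    map_pow, aeval_X, ← integral_div]
  congr 1 with x
  ring

/-- The even GUE moments satisfy `m_0 = N`, `m_2 = N²`, and the Harer–Zagier
three term recurrence
`(p+1)m_{2p} = (4p−2)N·m_{2p−2} + (p−1)(2p−1)(2p−3)m_{2p−4}`. -/
theorem gueMoment_recurrence (N : ℕ) (hN : 1 ≤ N) :
    gueMoment N 0 = N ∧ gueMoment N 1 = (N : ℝ) ^ 2 ∧
    ∀ p : ℕ, 2 ≤ p →
      ((p : ℝ) + 1) * gueMoment N p =
        (4 * (p : ℝ) - 2) * (N : ℝ) * gueMoment N (p - 1) +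
          ((p : ℝ) - 1) * (2 * (p : ℝ) - 1) * (2 * (p : ℝ) - 3) * gueMoment N (p - 2) := by
  obtain ⟨n, rfl⟩ := Nat.exists_eq_add_of_le' hN
  have hm0 : wronskianMoment n 0 / (√(2 * π) * n !) = n + 1 := by
    rw [wronskianMoment_zero, factorial_succ]
    field_simp
    push_cast
    ring
  refine ⟨by rw [gueMoment_succ, mul_zero, hm0]; push_cast; ring, ?_, fun p hp => ?_⟩
  · rw [gueMoment_succ, mul_one, wronskianMoment_two, mul_div_assoc, hm0]
    push_cast
    ring
  · obtain ⟨q, rfl⟩ := Nat.exists_eq_add_of_le' hp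
    simp only [gueMoment_succ, Nat.add_sub_cancel, show q + 2 - 1 = q + 1 by omega,
      mul_add, mul_one]
    have h := wronskianMoment_add_four n (2 * q)
    field_simp
    push_cast at h ⊢
    linear_combination (1 / 2) * h
end

section
/- Let N ≥ 2 be an integer and let ρ_N be the unscaled GOE eigenvalue density. Then ρ_N satisfies, for every real x, the fifth order linear ordinary differential equation −4·ρ_N^{(5)}(x) + 5·(x² − 4N + 2)·ρ_N'''(x) − 6x·ρ_N''(x) + (−x⁴ + (8N−4)·x² − 16N² + 16N + 2)·ρ_N'(x) + x·(x² − 4N + 2)·ρ_N(x) = 0. -/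
open Nat MeasureTheory

/-- `q_n(x) = ∫_{−∞}^{x} e^{−t²/4} p_n(t) dt`. -/
noncomputable def qFun (n : ℕ) (x : ℝ) : ℝ :=
  ∫ t in Set.Iic x, Real.exp (-t ^ 2 / 4) * pOrtho n t

/-- `D_n = π^{1/4} 2^{3/4} √((n−1)!!/n!!)`. -/
noncomputable def Dconst (n : ℕ) : ℝ :=
  Real.pi ^ ((1 : ℝ) / 4) * (2 : ℝ) ^ ((3 : ℝ) / 4) *
    Real.sqrt ((Nat.doubleFactorial (n - 1) : ℝ) / (Nat.doubleFactorial n : ℝ))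

/-- `A_N = −(1/4)D_N` for even `N`, and `A_N = N^{−1/2} D_{N−1}^{−1}` for odd `N`. -/
noncomputable def Aconst (N : ℕ) : ℝ :=
  if N % 2 = 0 then -(1 / 4) * Dconst N else (Real.sqrt N)⁻¹ * (Dconst (N - 1))⁻¹

/-- The (unscaled) GOE eigenvalue density
`ρ_N(x) = √N·(e^{−x²/2}(p_N'p_{N−1} − p_N p_{N−1}') + e^{−x²/4}((1/2)q_N + A_N)p_{N−1})`. -/
noncomputable def goeDensity (N : ℕ) (x : ℝ) : ℝ :=
  Real.sqrt N *
    (Real.exp (-x ^ 2 / 2) *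
        (deriv (pOrtho N) x * pOrtho (N - 1) x - pOrtho N x * deriv (pOrtho (N - 1)) x) +
      Real.exp (-x ^ 2 / 4) * ((1 / 2) * qFun N x + Aconst N) * pOrtho (N - 1) x)

/-!
With `ψ_n = e^{-x²/4} p_n` and `s = √N`, the ladder relations `ψ_N' = s ψ_{N-1} - (x/2) ψ_N`,
`ψ_{N-1}' = (x/2) ψ_{N-1} - s ψ_N` and `(q_N/2 + A_N)' = ψ_N/2` close up, so `ρ_N` and all its
derivatives are polynomials in `x`, `ψ_N`, `ψ_{N-1}` and `q_N/2 + A_N`, and `d/dx` acts on them as a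
derivation `D` of the polynomial ring. With `u = x² - 4N + 2` the fifth order operator factors as
`(-D³ + u D - 3x) ∘ (4D² - u)`. The right factor is the Hermite operator annihilating `ψ_{N-1}`; it
kills the integral term and leaves a quadratic form in `ψ_N, ψ_{N-1}` which the third order factor
annihilates.
-/

theorem Derivation.map_ofNat {R A M : Type*} [CommSemiring R] [CommSemiring A] [Algebra R A]
    [AddCommMonoid M] [Module A M] [Module R M] (D : Derivation R A M) (n : ℕ) [n.AtLeastTwo] :
    D (ofNat(n) : A) = 0 := by
  rw [← Nat.cast_ofNat]
  exact D.map_natCast n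

theorem Derivation.fifthOrder_factorization {R A : Type*} [CommRing R] [CommRing A] [Algebra R A]
    (D : Derivation R A A) {x u : A} (hx : D x = 1) (hu : D u = 2 * x) (f : A) :
    -4 * D (D (D (D (D f)))) + 5 * u * D (D (D f)) - 6 * x * D (D f) + (6 - u ^ 2) * D f
        + x * u * f =
      -D (D (D (4 * D (D f) - u * f))) + u * D (4 * D (D f) - u * f)
        - 3 * x * (4 * D (D f) - u * f) := by
  simp only [map_add, map_sub, map_zero, Derivation.leibniz, Derivation.map_ofNat,
    Derivation.map_one_eq_zero, smul_eq_mul, hx, hu]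
  ring

namespace MvPolynomial

variable {𝕜 σ : Type*} [NontriviallyNormedField 𝕜] {γ : 𝕜 → σ → 𝕜} {V : σ → MvPolynomial σ 𝕜}

theorem hasDerivAt_eval_mkDerivation {x : 𝕜}
    (hγ : ∀ i, HasDerivAt (fun t => γ t i) (eval (γ x) (V i)) x) (p : MvPolynomial σ 𝕜) :
    HasDerivAt (fun t => eval (γ t) p) (eval (γ x) (mkDerivation 𝕜 V p)) x := by
  induction p using MvPolynomial.induction_on with
  | C a => simpa using hasDerivAt_const x a
  | add p q hp hq => simpa only [map_add] using hp.fun_add hq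
  | mul_X p i hp =>
    simp only [map_mul, eval_X, Derivation.leibniz, mkDerivation_X, smul_eq_mul, map_add]
    exact (hp.fun_mul (hγ i)).congr_deriv (by ring)

theorem iteratedDeriv_eval_mkDerivation
    (hγ : ∀ x i, HasDerivAt (fun t => γ t i) (eval (γ x) (V i)) x) (p : MvPolynomial σ 𝕜) (k : ℕ) :
    iteratedDeriv k (fun t => eval (γ t) p) = fun t => eval (γ t) ((mkDerivation 𝕜 V)^[k] p) := by
  induction k with
  | zero => simp
  | succ k ih =>
    funext x
    rw [iteratedDeriv_succ, ih, Function.iterate_succ_apply']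
    exact (hasDerivAt_eval_mkDerivation (hγ x) _).deriv

end MvPolynomial

theorem MeasureTheory.Integrable.hasDerivAt_integral_Iic {E : Type*} [NormedAddCommGroup E]
    [NormedSpace ℝ E] [CompleteSpace E] {f : ℝ → E} (hfi : Integrable f) (hf : Continuous f)
    (x : ℝ) : HasDerivAt (fun u => ∫ t in Set.Iic u, f t) (f x) x := by
  have hsplit : (fun u => ∫ t in Set.Iic u, f t) =
      fun u => (∫ t in Set.Iic 0, f t) + ∫ t in (0 : ℝ)..u, f t := by
    funext u
    rw [← intervalIntegral.integral_Iic_sub_Iic hfi.integrableOn hfi.integrableOn]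
    abel
  rw [hsplit]
  exact (intervalIntegral.integral_hasDerivAt_right hfi.intervalIntegrable
    hf.aestronglyMeasurable.stronglyMeasurableAtFilter hf.continuousAt).const_add _

namespace Polynomial

theorem integrable_aeval_mul_exp_neg_mul_sq {R : Type*} [CommSemiring R] [Algebra R ℝ] {b : ℝ}
    (hb : 0 < b) (p : R[X]) : Integrable fun t : ℝ => aeval t p * Real.exp (-b * t ^ 2) := by
  induction p using Polynomial.induction_on' with
  | add p q hp hq =>
    refine (hp.add hq).congr (.of_forall fun t => ?_)
    simp only [Pi.add_apply, map_add, add_mul]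
  | monomial n a =>
    have h := integrable_rpow_mul_exp_neg_mul_sq hb (s := n) (by linarith [n.cast_nonneg (α := ℝ)])
    simpa only [aeval_monomial, Real.rpow_natCast, mul_assoc] using h.const_mul (algebraMap R ℝ a)

end Polynomial

namespace GOE

section

open Polynomial Real

theorem sqrt_sqrt_two_pi_mul_factorial_succ (n : ℕ) :
    √(√(2 * π) * ((n + 1)! : ℝ)) = √((n : ℝ) + 1) * √(√(2 * π) * (n ! : ℝ)) := by
  rw [← Real.sqrt_mul (by positivity), Nat.factorial_succ]
  push_cast
  ring_nf

theorem hasDerivAt_pOrtho_succ (n : ℕ) (x : ℝ) :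
    HasDerivAt (pOrtho (n + 1)) (√((n : ℝ) + 1) * pOrtho n x) x := by
  refine ((hermite (n + 1)).hasDerivAt_aeval x |>.div_const _).congr_deriv ?_
  rw [derivative_hermite_succ, sqrt_sqrt_two_pi_mul_factorial_succ, pOrtho]
  simp only [map_mul, map_add, map_natCast, map_one]
  field_simp
  rw [Real.sq_sqrt (by positivity)]
  ring

theorem hasDerivAt_pOrtho (n : ℕ) (x : ℝ) :
    HasDerivAt (pOrtho n) (x * pOrtho n x - √((n : ℝ) + 1) * pOrtho (n + 1) x) x := by
  refine ((hermite n).hasDerivAt_aeval x |>.div_const _).congr_deriv ?_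
  rw [pOrtho, pOrtho, sqrt_sqrt_two_pi_mul_factorial_succ, hermite_succ]
  simp only [map_sub, map_mul, aeval_X]
  field_simp
  ring

noncomputable def hermiteFun (n : ℕ) (x : ℝ) : ℝ := exp (-x ^ 2 / 4) * pOrtho n x

theorem hasDerivAt_exp_neg_sq_div_four (x : ℝ) :
    HasDerivAt (fun y => exp (-y ^ 2 / 4)) (exp (-x ^ 2 / 4) * (-x / 2)) x := by
  refine (((hasDerivAt_pow 2 x).fun_neg.div_const 4).exp).congr_deriv ?_
  ring

theorem hasDerivAt_hermiteFun_succ (n : ℕ) (x : ℝ) :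
    HasDerivAt (hermiteFun (n + 1))
      (√((n : ℝ) + 1) * hermiteFun n x - x / 2 * hermiteFun (n + 1) x) x := by
  refine ((hasDerivAt_exp_neg_sq_div_four x).mul (hasDerivAt_pOrtho_succ n x)).congr_deriv ?_
  simp only [hermiteFun]
  ring

theorem hasDerivAt_hermiteFun (n : ℕ) (x : ℝ) :
    HasDerivAt (hermiteFun n)
      (x / 2 * hermiteFun n x - √((n : ℝ) + 1) * hermiteFun (n + 1) x) x := by
  refine ((hasDerivAt_exp_neg_sq_div_four x).mul (hasDerivAt_pOrtho n x)).congr_deriv ?_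
  simp only [hermiteFun]
  ring

theorem integrable_hermiteFun (n : ℕ) : Integrable (hermiteFun n) := by
  refine ((integrable_aeval_mul_exp_neg_mul_sq (by norm_num : (0 : ℝ) < 1 / 4)
    (hermite n)).div_const (√(√(2 * π) * (n ! : ℝ)))).congr (.of_forall fun t => ?_)
  simp only [hermiteFun, pOrtho]
  ring_nf

theorem hasDerivAt_qFun (n : ℕ) (x : ℝ) : HasDerivAt (qFun n) (hermiteFun n x) x :=
  (integrable_hermiteFun n).hasDerivAt_integral_Iic
    (continuous_iff_continuousAt.2 fun y => (hasDerivAt_hermiteFun n y).continuousAt) x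

end

open MvPolynomial

/-- The variables stand for `x`, `ψ_N = e^{-x²/4} p_N`, `ψ_{N-1}` and `q_N / 2 + A_N`, and `s`
for `√N`; the field is read off from the ladder relations of the Hermite functions. -/
noncomputable def ladderField (s : ℝ) : Fin 4 → MvPolynomial (Fin 4) ℝ :=
  ![1, C s * X 2 - C (1 / 2) * X 0 * X 1, C (1 / 2) * X 0 * X 2 - C s * X 1, C (1 / 2) * X 1]

section Ladder

variable (s : ℝ)

local notation "𝔇" => mkDerivation ℝ (ladderField s)

theorem ladder_X_zero : 𝔇 (X 0) = 1 := mkDerivation_X _ _ _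

theorem ladder_X_one : 𝔇 (X 1) = C s * X 2 - C (1 / 2) * X 0 * X 1 :=
  mkDerivation_X _ _ _

theorem ladder_X_two : 𝔇 (X 2) = C (1 / 2) * X 0 * X 2 - C s * X 1 :=
  mkDerivation_X _ _ _

theorem ladder_X_three : 𝔇 (X 3) = C (1 / 2) * X 1 := mkDerivation_X _ _ _

noncomputable def densityPoly : MvPolynomial (Fin 4) ℝ :=
  C s * (C s * (X 1 * X 1 + X 2 * X 2) - X 0 * X 1 * X 2 + X 2 * X 3)

noncomputable def hermitePotential : MvPolynomial (Fin 4) ℝ := X 0 * X 0 - C (4 * s * s - 2)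

noncomputable def reducedDensityPoly : MvPolynomial (Fin 4) ℝ :=
  C s * (X 0 * (hermitePotential s + C 1) * X 1 * X 2 - C s * hermitePotential s * X 1 * X 1
    - C s * (hermitePotential s + C 2) * X 2 * X 2)

theorem ladder_hermitePotential : 𝔇 (hermitePotential s) = 2 * X 0 := by
  simp only [hermitePotential, map_sub, Derivation.leibniz, derivation_C, ladder_X_zero,
    smul_eq_mul]
  ring

theorem hermiteOp_densityPoly :
    4 * 𝔇 (𝔇 (densityPoly s)) - hermitePotential s * densityPoly s = reducedDensityPoly s := by
  apply MvPolynomial.funext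
  intro v
  simp only [densityPoly, hermitePotential, reducedDensityPoly, map_add, map_sub, map_mul,
    Derivation.leibniz, smul_eq_mul, ladder_X_zero, ladder_X_one, ladder_X_two, ladder_X_three,
    derivation_C, map_ofNat, map_one, map_zero, Derivation.map_one_eq_zero, eval_X, eval_C]
  ring

theorem reducedOp_reducedDensityPoly :
    -𝔇 (𝔇 (𝔇 (reducedDensityPoly s))) + hermitePotential s * 𝔇 (reducedDensityPoly s)
      - 3 * X 0 * reducedDensityPoly s = 0 := by
  apply MvPolynomial.funext
  intro v
  simp only [hermitePotential, reducedDensityPoly, map_add, map_sub, map_mul, map_neg,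
    Derivation.leibniz, smul_eq_mul, ladder_X_zero, ladder_X_one, ladder_X_two, derivation_C,
    Derivation.map_ofNat, map_ofNat, map_one, map_zero, Derivation.map_one_eq_zero, eval_X, eval_C]
  ring

theorem densityPoly_ode :
    -4 * 𝔇^[5] (densityPoly s) + 5 * hermitePotential s * 𝔇^[3] (densityPoly s)
      - 6 * X 0 * 𝔇^[2] (densityPoly s) + (6 - hermitePotential s ^ 2) * 𝔇 (densityPoly s)
      + X 0 * hermitePotential s * densityPoly s = 0 := by
  have h := (mkDerivation ℝ (ladderField s)).fifthOrder_factorization (ladder_X_zero s)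
    (ladder_hermitePotential s) (densityPoly s)
  rwa [hermiteOp_densityPoly, reducedOp_reducedDensityPoly] at h

end Ladder

noncomputable def goeState (n : ℕ) (x : ℝ) : Fin 4 → ℝ :=
  ![x, hermiteFun (n + 1) x, hermiteFun n x, 1 / 2 * qFun (n + 1) x + Aconst (n + 1)]

theorem hasDerivAt_goeState (n : ℕ) (x : ℝ) (i : Fin 4) :
    HasDerivAt (fun t => goeState n t i)
      (eval (goeState n x) (ladderField √((n : ℝ) + 1) i)) x := by
  fin_cases i <;>
    simp only [goeState, ladderField, Fin.zero_eta, Fin.mk_one, Fin.reduceFinMk, Fin.isValue,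
      Matrix.cons_val, Matrix.cons_val_zero, Matrix.cons_val_one, one_div, map_one, map_sub, map_mul,
      eval_C, eval_X, hasDerivAt_add_const_iff]
  · exact hasDerivAt_id x
  · exact (hasDerivAt_hermiteFun_succ n x).congr_deriv (by ring)
  · exact (hasDerivAt_hermiteFun n x).congr_deriv (by ring)
  · exact (hasDerivAt_qFun (n + 1) x).const_mul _

theorem goeDensity_eq_eval (n : ℕ) :
    goeDensity (n + 1) = fun x => eval (goeState n x) (densityPoly √((n : ℝ) + 1)) := by
  funext x
  have hexp : Real.exp (-x ^ 2 / 2) = Real.exp (-x ^ 2 / 4) * Real.exp (-x ^ 2 / 4) := by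
    rw [← Real.exp_add]
    ring_nf
  simp only [goeDensity, Nat.add_sub_cancel, (hasDerivAt_pOrtho_succ n x).deriv,
    (hasDerivAt_pOrtho n x).deriv, hexp, densityPoly, map_add, map_sub, map_mul, eval_X, eval_C,
    goeState, hermiteFun]
  push_cast
  ring

theorem iteratedDeriv_goeDensity (n k : ℕ) :
    iteratedDeriv k (goeDensity (n + 1)) = fun x => eval (goeState n x)
      ((mkDerivation ℝ (ladderField √((n : ℝ) + 1)))^[k] (densityPoly √((n : ℝ) + 1))) := by
  rw [goeDensity_eq_eval, iteratedDeriv_eval_mkDerivation (hasDerivAt_goeState n)]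

end GOE

/-- The unscaled GOE eigenvalue density satisfies the fifth order linear ODE
`−4ρ⁽⁵⁾ + 5(x²−4N+2)ρ''' − 6xρ'' + (−x⁴+(8N−4)x²−16N²+16N+2)ρ' + x(x²−4N+2)ρ = 0`. -/
theorem goeDensity_ode (N : ℕ) (hN : 2 ≤ N) (x : ℝ) :
    -4 * iteratedDeriv 5 (goeDensity N) x +
        5 * (x ^ 2 - 4 * (N : ℝ) + 2) * iteratedDeriv 3 (goeDensity N) x -
        6 * x * iteratedDeriv 2 (goeDensity N) x +
        (-x ^ 4 + (8 * (N : ℝ) - 4) * x ^ 2 - 16 * (N : ℝ) ^ 2 + 16 * (N : ℝ) + 2) *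
          deriv (goeDensity N) x +
        x * (x ^ 2 - 4 * (N : ℝ) + 2) * goeDensity N x = 0 := by
  obtain ⟨n, rfl⟩ : ∃ n, N = n + 1 := ⟨N - 1, by omega⟩
  have hN_sq : ((n + 1 : ℕ) : ℝ) = √((n : ℝ) + 1) ^ 2 := by
    push_cast
    rw [Real.sq_sqrt (by positivity)]
  have hode := congrArg (MvPolynomial.eval (GOE.goeState n x))
    (GOE.densityPoly_ode √((n : ℝ) + 1))
  simp only [← iteratedDeriv_one, GOE.iteratedDeriv_goeDensity,
    congrFun (GOE.goeDensity_eq_eval n) x, hN_sq]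
  simp only [Function.iterate_succ_apply', Function.iterate_zero_apply, map_add, map_sub, map_mul,
    map_neg, map_pow, map_ofNat, map_zero, MvPolynomial.eval_X, MvPolynomial.eval_C,
    GOE.hermitePotential, GOE.goeState, Matrix.cons_val_zero] at hode ⊢
  linear_combination hode
end
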